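/- Let q be a real number with q > 0, q ≠ 1, let n be a natural number, and let K, E, F be the spin-(n/2) representation operators on ℂ^{n+1} (K e_i = q^{i−n/2} e_i, E e_i = √([n−i][i+1]) e_{i+1}, F e_i = √([n−i+1][i]) e_{i−1}). Define Z₁ = K⁻¹E, Z₀ = (q⁻¹FE − qEF)/√[2], Z₋₁ = −K⁻¹F, let s(ψ₁), s(ψ₀), s(ψ₋₁) be the 2×2 spin matrices, and let D_n = −q[2]·Z₁ ⊗ s(ψ₋₁) + [2]·Z₀ ⊗ s(ψ₀) − q⁻¹[2]·Z₋₁ ⊗ s(ψ₁) acting on ℂ^{n+1} ⊗ ℂ². Then D_n satisfies the quadratic relation (D_n − [n]·1)·(D_n + [n+2]·1) = 0, and its trace is Tr(D_n) = (n+2)·[n] − n·[n+2]. (Equivalently, with j = n/2, the Dirac operator D acts on V_j ⊗ Σ with eigenvalue [2j] on the spin-(j+1/2) component of dimension 2j+2 and eigenvalue −[2j+2] on the spin-(j−1/2) component of dimension 2j.) -/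

import Mathlib

open Matrix Kronecker

/-- The `q`-integer `[m] = (q^m − q^{−m})/(q − q⁻¹)`. -/
noncomputable def qInt (q : ℝ) (m : ℕ) : ℝ := (q ^ m - q⁻¹ ^ m) / (q - q⁻¹)

/-- `K eᵢ = q^{i − n/2} eᵢ` on `ℂ^{n+1}` (real power of `q > 0`). -/
noncomputable def Kmat (q : ℝ) (n : ℕ) : Matrix (Fin (n + 1)) (Fin (n + 1)) ℂ :=
  Matrix.diagonal fun i => ((q ^ ((i : ℝ) - (n : ℝ) / 2) : ℝ) : ℂ)

/-- `K⁻¹ eᵢ = q^{n/2 − i} eᵢ` on `ℂ^{n+1}`. -/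
noncomputable def Kinvmat (q : ℝ) (n : ℕ) : Matrix (Fin (n + 1)) (Fin (n + 1)) ℂ :=
  Matrix.diagonal fun i => ((q ^ ((n : ℝ) / 2 - (i : ℝ)) : ℝ) : ℂ)

/-- `E eᵢ = √([n−i]·[i+1]) e_{i+1}` on `ℂ^{n+1}` (and `E e_n = 0`). -/
noncomputable def Emat (q : ℝ) (n : ℕ) : Matrix (Fin (n + 1)) (Fin (n + 1)) ℂ :=
  Matrix.of fun j i =>
    if (j : ℕ) = (i : ℕ) + 1 then
      ((Real.sqrt (qInt q (n - (i : ℕ)) * qInt q ((i : ℕ) + 1)) : ℝ) : ℂ) else 0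

/-- `F eᵢ = √([n−i+1]·[i]) e_{i−1}` on `ℂ^{n+1}` (and `F e₀ = 0`). -/
noncomputable def Fmat (q : ℝ) (n : ℕ) : Matrix (Fin (n + 1)) (Fin (n + 1)) ℂ :=
  Matrix.of fun j i =>
    if (j : ℕ) + 1 = (i : ℕ) then
      ((Real.sqrt (qInt q (n - (i : ℕ) + 1) * qInt q (i : ℕ)) : ℝ) : ℂ) else 0

/-- The spin matrix `s(ψ₁) = [[0, √q],[0, 0]]`. -/
noncomputable def psi1 (q : ℝ) : Matrix (Fin 2) (Fin 2) ℂ :=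
  !![0, ((Real.sqrt q : ℝ) : ℂ); 0, 0]

/-- The spin matrix `s(ψ₀) = −(1/√[2])·[[q⁻¹, 0],[0, −q]]` where `[2] = q + q⁻¹`. -/
noncomputable def psi0 (q : ℝ) : Matrix (Fin 2) (Fin 2) ℂ :=
  (-(((1 / Real.sqrt (q + q⁻¹) : ℝ) : ℂ))) • !![((q⁻¹ : ℝ) : ℂ), 0; 0, -((q : ℝ) : ℂ)]

/-- The spin matrix `s(ψ₋₁) = [[0, 0],[−1/√q, 0]]`. -/
noncomputable def psim1 (q : ℝ) : Matrix (Fin 2) (Fin 2) ℂ :=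
  !![0, 0; -((((1 / Real.sqrt q) : ℝ) : ℂ)), 0]

/-- The quantum Lie algebra element `Z₁ = K⁻¹E` in the spin-`n/2` representation. -/
noncomputable def Z1 (q : ℝ) (n : ℕ) : Matrix (Fin (n + 1)) (Fin (n + 1)) ℂ :=
  Kinvmat q n * Emat q n

/-- The quantum Lie algebra element `Z₀ = (q⁻¹FE − qEF)/√[2]` in the spin-`n/2`
representation. -/
noncomputable def Z0 (q : ℝ) (n : ℕ) : Matrix (Fin (n + 1)) (Fin (n + 1)) ℂ :=
  (((Real.sqrt (q + q⁻¹) : ℝ) : ℂ))⁻¹ •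
    (((q : ℂ))⁻¹ • (Fmat q n * Emat q n) - (q : ℂ) • (Emat q n * Fmat q n))

/-- The quantum Lie algebra element `Z₋₁ = −K⁻¹F` in the spin-`n/2` representation. -/
noncomputable def Zm1 (q : ℝ) (n : ℕ) : Matrix (Fin (n + 1)) (Fin (n + 1)) ℂ :=
  -(Kinvmat q n * Fmat q n)

/-- The Dirac operator
`D_n = −q[2]·Z₁ ⊗ s(ψ₋₁) + [2]·Z₀ ⊗ s(ψ₀) − q⁻¹[2]·Z₋₁ ⊗ s(ψ₁)` on `ℂ^{n+1} ⊗ ℂ²`. -/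
noncomputable def Dirac (q : ℝ) (n : ℕ) :
    Matrix (Fin (n + 1) × Fin 2) (Fin (n + 1) × Fin 2) ℂ :=
  (-(q : ℂ) * ((q + q⁻¹ : ℝ) : ℂ)) • (Z1 q n ⊗ₖ psim1 q) +
    ((q + q⁻¹ : ℝ) : ℂ) • (Z0 q n ⊗ₖ psi0 q) +
    (-((q : ℂ))⁻¹ * ((q + q⁻¹ : ℝ) : ℂ)) • (Zm1 q n ⊗ₖ psi1 q)

/-!
In the basis `eᵢ ⊗ ↑, eᵢ ⊗ ↓`, `D_n` is diagonal up to the couplings `eₖ ⊗ ↑ ↔ eₖ₊₁ ⊗ ↓`, so it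
is block diagonal with `2 × 2` blocks `[[aₖ, cₖ], [cₖ, bₖ₊₁]]` for `k < n`, together with the two
`1 × 1` blocks at `eₙ ⊗ ↑` and `e₀ ⊗ ↓`, both equal to `[n]`. Each `2 × 2` block has trace
`[n] − [n+2]` and determinant `−[n][n+2]` (identities of Laurent polynomials in `q`, `qᵏ`,
`qⁿ⁻ᵏ`), so by Cayley–Hamilton it satisfies `(X − [n])(X + [n+2]) = 0`; summing the traces
gives `n([n] − [n+2]) + 2[n]`.
-/

theorem Fin.sum_ite_val_eq {M : Type*} [AddCommMonoid M] {m : ℕ} (a : ℕ) (f : Fin m → M) :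
    ∑ k : Fin m, (if (k : ℕ) = a then f k else 0) = if h : a < m then f ⟨a, h⟩ else 0 := by
  split_ifs with h
  · simp [← Fin.ext_iff (b := ⟨a, h⟩)]
  · exact Finset.sum_eq_zero fun k _ => if_neg fun hk => h (by omega)

theorem Fin.ite_val_add_one_eq {α : Type*} [Zero α] {n : ℕ} (i j : Fin (n + 1)) {c : α}
    (hc : i = Fin.last n → c = 0) :
    (if (i : ℕ) + 1 = j then c else 0) = if j = i + 1 then c else 0 := by
  by_cases hi : i = Fin.last n
  · simp [hc hi]
  · refine if_congr ?_ rfl rfl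
    rw [Fin.ext_iff (b := i + 1), Fin.val_add_one, if_neg hi, eq_comm]

namespace Matrix

theorem trace_submatrix_equiv {m n R : Type*} [Fintype m] [Fintype n] [AddCommMonoid R]
    (A : Matrix n n R) (e : m ≃ n) : (A.submatrix e e).trace = A.trace :=
  e.sum_comp fun i => A i i

theorem sub_smul_one_mul_add_smul_one_eq_zero_of_fin_two {R : Type*} [CommRing R] [Nontrivial R]
    (M : Matrix (Fin 2) (Fin 2) R) {x y : R} (htr : M.trace = x - y) (hdet : M.det = -(x * y)) :
    (M - x • 1) * (M + y • 1) = 0 := by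
  have hCH := M.aeval_self_charpoly
  rw [charpoly_fin_two, htr, hdet] at hCH
  simp only [map_add, map_sub, map_mul, map_pow, Polynomial.aeval_X, Polynomial.aeval_C,
    Algebra.algebraMap_eq_smul_one] at hCH
  rw [← hCH]
  simp only [sub_mul, mul_add, sq, smul_mul_assoc, mul_smul_comm, one_mul, mul_one]
  module

theorem sub_smul_one_mul_add_smul_one_eq_zero_of_blockDiagonal {ι m o R : Type*}
    [Fintype ι] [DecidableEq ι] [Fintype m] [DecidableEq m] [Fintype o] [DecidableEq o] [CommRing R]
    (e : ι ≃ m × o) (G : o → Matrix m m R) {x y : R}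
    (hG : ∀ k, (G k - x • 1) * (G k + y • 1) = 0) :
    ((blockDiagonal G).submatrix e e - x • 1) * ((blockDiagonal G).submatrix e e + y • 1) = 0 := by
  have hB : (blockDiagonal G - x • 1) * (blockDiagonal G + y • 1) = 0 := by
    rw [← blockDiagonal_one, ← blockDiagonal_smul, ← blockDiagonal_smul, ← blockDiagonal_sub,
      ← blockDiagonal_add, ← blockDiagonal_mul]
    simp_rw [Pi.sub_apply, Pi.add_apply, Pi.smul_apply, Pi.one_apply, hG]
    exact blockDiagonal_zero
  have := congrArg (reindexAlgEquiv R R e.symm) hB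
  rwa [map_mul, map_sub, map_add, map_smul, map_smul, map_one, map_zero, coe_reindexAlgEquiv,
    reindex_apply, Equiv.symm_symm] at this

end Matrix

section

variable {q : ℝ} {n : ℕ}

theorem qInt_nonneg (hq : 0 < q) (m : ℕ) : 0 ≤ qInt q m := by
  rcases le_total q⁻¹ q with h | h
  · exact div_nonneg (sub_nonneg.2 (pow_le_pow_left₀ (by positivity) h m)) (sub_nonneg.2 h)
  · exact div_nonneg_of_nonpos (sub_nonpos.2 (pow_le_pow_left₀ hq.le h m)) (sub_nonpos.2 h)

@[simp] theorem qInt_zero : qInt q 0 = 0 := by simp [qInt]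

theorem sq_sub_one_ne_zero (hq : 0 < q) (hq1 : q ≠ 1) : q ^ 2 - 1 ≠ 0 := by
  rw [sub_ne_zero, Ne, pow_eq_one_iff_of_nonneg hq.le two_ne_zero]
  exact hq1

theorem qInt_eq (hq : q ≠ 0) (m : ℕ) : qInt q m = (q ^ m - (q ^ m)⁻¹) * q / (q ^ 2 - 1) := by
  rw [qInt, inv_pow, ← div_div_eq_mul_div]
  congr 1
  field_simp

theorem qInt_one (hq : 0 < q) (hq1 : q ≠ 1) : qInt q 1 = 1 := by
  have := sq_sub_one_ne_zero hq hq1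
  rw [qInt_eq hq.ne']
  field_simp

theorem Fmat_mul_Emat (hq : 0 < q) :
    Fmat q n * Emat q n =
      diagonal fun i : Fin (n + 1) => ((qInt q (n - i) * qInt q (i + 1) : ℝ) : ℂ) := by
  ext j i
  simp only [mul_apply, Fmat, Emat, of_apply, ite_mul, zero_mul, mul_ite, mul_zero, ← ite_and,
    diagonal_apply]
  by_cases h : j = i
  · subst h
    simp only [and_self, eq_comm (a := (j : ℕ) + 1), Fin.sum_ite_val_eq, if_true]
    split_ifs with hj
    · rw [show n - (j + 1 : ℕ) + 1 = n - j by omega, ← Complex.ofReal_mul,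
        Real.mul_self_sqrt (mul_nonneg (qInt_nonneg hq _) (qInt_nonneg hq _))]
    · simp [show n - (j : ℕ) = 0 by omega]
  · rw [if_neg h]
    exact Finset.sum_eq_zero fun k _ => if_neg (by omega)

theorem Emat_mul_Fmat (hq : 0 < q) :
    Emat q n * Fmat q n =
      diagonal fun i : Fin (n + 1) => ((qInt q (n - i + 1) * qInt q i : ℝ) : ℂ) := by
  ext j i
  simp only [mul_apply, Fmat, Emat, of_apply, ite_mul, zero_mul, mul_ite, mul_zero, ← ite_and,
    diagonal_apply]
  by_cases h : j = i
  · subst h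
    obtain ⟨_ | j, hj⟩ := j
    · simp
    · simp only [Nat.add_right_cancel_iff, eq_comm (a := j), and_self, Fin.sum_ite_val_eq,
        dif_pos (Nat.lt_of_succ_lt hj), show n - (j + 1) + 1 = n - j by omega, if_true]
      rw [← Complex.ofReal_mul,
        Real.mul_self_sqrt (mul_nonneg (qInt_nonneg hq _) (qInt_nonneg hq _))]
  · rw [if_neg h]
    exact Finset.sum_eq_zero fun k _ => if_neg (by omega)

noncomputable def diracDiagUp (q : ℝ) (n i : ℕ) : ℝ :=
  qInt q (n - i + 1) * qInt q i - q⁻¹ ^ 2 * (qInt q (n - i) * qInt q (i + 1))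

noncomputable def diracDiagDown (q : ℝ) (n i : ℕ) : ℝ :=
  qInt q (n - i) * qInt q (i + 1) - q ^ 2 * (qInt q (n - i + 1) * qInt q i)

noncomputable def diracOffDiag (q : ℝ) (n k : ℕ) : ℝ :=
  (q + q⁻¹) * q ^ ((n : ℝ) / 2 - k - 1 / 2) * √(qInt q (n - k) * qInt q (k + 1))

theorem ofReal_add_inv_mul_inv_sqrt_mul_inv_sqrt (hq : 0 < q) :
    ((q : ℂ) + (q : ℂ)⁻¹) * ((√(q + q⁻¹) : ℝ) : ℂ)⁻¹ * ((√(q + q⁻¹) : ℝ) : ℂ)⁻¹ = 1 := by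
  have h2 : 0 < q + q⁻¹ := by positivity
  rw [mul_assoc, ← mul_inv, ← Complex.ofReal_mul, Real.mul_self_sqrt h2.le]
  push_cast
  exact mul_inv_cancel₀ (by exact_mod_cast h2.ne')

theorem Dirac_apply_zero_zero (hq : 0 < q) (i j : Fin (n + 1)) :
    Dirac q n (i, 0) (j, 0) = if i = j then (diracDiagUp q n i : ℂ) else 0 := by
  simp [Dirac, Z0, Fmat_mul_Emat hq, Emat_mul_Fmat hq, diagonal_apply, psi0, psi1, psim1]
  split_ifs
  · linear_combination (norm := skip)
      (diracDiagUp q n i : ℂ) * ofReal_add_inv_mul_inv_sqrt_mul_inv_sqrt hq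
    have hq0 : (q : ℂ) ≠ 0 := by exact_mod_cast hq.ne'
    simp only [diracDiagUp]
    push_cast
    field_simp
    ring
  · simp

theorem Dirac_apply_one_one (hq : 0 < q) (i j : Fin (n + 1)) :
    Dirac q n (i, 1) (j, 1) = if i = j then (diracDiagDown q n i : ℂ) else 0 := by
  simp [Dirac, Z0, Fmat_mul_Emat hq, Emat_mul_Fmat hq, diagonal_apply, psi0, psi1, psim1]
  split_ifs
  · linear_combination (norm := skip)
      (diracDiagDown q n i : ℂ) * ofReal_add_inv_mul_inv_sqrt_mul_inv_sqrt hq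
    have hq0 : (q : ℂ) ≠ 0 := by exact_mod_cast hq.ne'
    simp only [diracDiagDown]
    push_cast
    field_simp
    ring
  · simp

theorem Dirac_apply_zero_one (hq : 0 < q) (i j : Fin (n + 1)) :
    Dirac q n (i, 0) (j, 1) = if (i : ℕ) + 1 = j then (diracOffDiag q n i : ℂ) else 0 := by
  simp [Dirac, Zm1, Fmat, Kinvmat, psi0, psi1, psim1]
  split_ifs with hij
  · have hsq : ((√q : ℝ) : ℂ) ^ 2 = q := by exact_mod_cast Real.sq_sqrt hq.le
    have hs0 : ((√q : ℝ) : ℂ) ≠ 0 := by exact_mod_cast (Real.sqrt_pos.2 hq).ne'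
    have hq0 : (q : ℂ) ≠ 0 := by exact_mod_cast hq.ne'
    have hpow : q ^ ((n : ℝ) / 2 - i - 1 / 2) = q ^ ((n : ℝ) / 2 - i) / √q := by
      rw [Real.rpow_sub hq, Real.sqrt_eq_rpow]
    rw [show n - (j : ℕ) + 1 = n - i by omega, ← hij, diracOffDiag, hpow]
    push_cast
    field_simp
    rw [hsq]
    ring
  · simp

theorem Dirac_apply_one_zero (hq : 0 < q) (i j : Fin (n + 1)) :
    Dirac q n (i, 1) (j, 0) = if (i : ℕ) = j + 1 then (diracOffDiag q n j : ℂ) else 0 := by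
  simp [Dirac, Z1, Emat, Kinvmat, psi0, psi1, psim1]
  split_ifs with hij
  · have hsq : ((√q : ℝ) : ℂ) ^ 2 = q := by exact_mod_cast Real.sq_sqrt hq.le
    have hs0 : ((√q : ℝ) : ℂ) ≠ 0 := by exact_mod_cast (Real.sqrt_pos.2 hq).ne'
    have hq0 : (q : ℂ) ≠ 0 := by exact_mod_cast hq.ne'
    have hpow : q ^ ((n : ℝ) / 2 - j - 1 / 2) = q ^ ((n : ℝ) / 2 - i) * √q := by
      rw [Real.sqrt_eq_rpow, ← Real.rpow_add hq]
      congr 1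
      push_cast [hij]
      ring
    rw [diracOffDiag, hpow]
    push_cast
    field_simp
    rw [hsq]
    ring
  · simp

theorem diracDiagUp_self (hq : 0 < q) (hq1 : q ≠ 1) : diracDiagUp q n n = qInt q n := by
  simp [diracDiagUp, qInt_one hq hq1]

theorem diracDiagDown_zero (hq : 0 < q) (hq1 : q ≠ 1) : diracDiagDown q n 0 = qInt q n := by
  simp [diracDiagDown, qInt_one hq hq1]

theorem diracOffDiag_self : diracOffDiag q n n = 0 := by
  simp [diracOffDiag]

theorem diracOffDiag_sq (hq : 0 < q) (k r : ℕ) :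
    diracOffDiag q (k + 1 + r) k ^ 2 =
      (q + q⁻¹) ^ 2 * (q ^ r / q ^ k) * (qInt q (r + 1) * qInt q (k + 1)) := by
  have hpow : (q ^ (((k + 1 + r : ℕ) : ℝ) / 2 - k - 1 / 2)) ^ 2 = q ^ r / q ^ k := by
    rw [← Real.rpow_natCast _ 2, ← Real.rpow_mul hq.le, ← Real.rpow_natCast q r,
      ← Real.rpow_natCast q k, ← Real.rpow_sub hq]
    congr 1
    push_cast
    ring
  rw [diracOffDiag, mul_pow, mul_pow, hpow,
    Real.sq_sqrt (mul_nonneg (qInt_nonneg hq _) (qInt_nonneg hq _)),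
    show k + 1 + r - k = r + 1 by omega]

theorem diracDiagUp_add_diracDiagDown (hq : 0 < q) (hq1 : q ≠ 1) {k : ℕ} (hk : k < n) :
    diracDiagUp q n k + diracDiagDown q n (k + 1) = qInt q n - qInt q (n + 2) := by
  obtain ⟨r, rfl⟩ : ∃ r, n = k + 1 + r := ⟨n - k - 1, by omega⟩
  have hq0 : q ≠ 0 := hq.ne'
  have hq2 := sq_sub_one_ne_zero hq hq1
  simp only [diracDiagUp, diracDiagDown, show k + 1 + r - k = r + 1 by omega,
    show k + 1 + r - (k + 1) = r by omega, qInt_eq hq0, pow_add, pow_one]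
  field_simp
  ring

theorem diracDiagUp_mul_diracDiagDown_sub_sq (hq : 0 < q) (hq1 : q ≠ 1) {k : ℕ} (hk : k < n) :
    diracDiagUp q n k * diracDiagDown q n (k + 1) - diracOffDiag q n k ^ 2 =
      -(qInt q n * qInt q (n + 2)) := by
  obtain ⟨r, rfl⟩ : ∃ r, n = k + 1 + r := ⟨n - k - 1, by omega⟩
  have hq0 : q ≠ 0 := hq.ne'
  have hq2 := sq_sub_one_ne_zero hq hq1
  rw [diracOffDiag_sq hq]
  simp only [diracDiagUp, diracDiagDown, show k + 1 + r - k = r + 1 by omega,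
    show k + 1 + r - (k + 1) = r by omega, qInt_eq hq0, pow_add, pow_one]
  field_simp
  ring

noncomputable def diracBlock (q : ℝ) (n : ℕ) (k : Fin (n + 1)) : Matrix (Fin 2) (Fin 2) ℂ :=
  !![(diracDiagUp q n k : ℂ), (diracOffDiag q n k : ℂ);
    (diracOffDiag q n k : ℂ), (diracDiagDown q n (k + 1 : Fin (n + 1)) : ℂ)]

theorem diracBlock_last (hq : 0 < q) (hq1 : q ≠ 1) :
    diracBlock q n (Fin.last n) = (qInt q n : ℂ) • 1 := by
  ext a b
  fin_cases a <;> fin_cases b <;>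
    simp [diracBlock, diracDiagUp_self hq hq1, diracDiagDown_zero hq hq1, diracOffDiag_self]

theorem val_add_one_of_ne_last {k : Fin (n + 1)} (hk : k ≠ Fin.last n) :
    ((k + 1 : Fin (n + 1)) : ℕ) = k + 1 := by
  rw [Fin.val_add_one, if_neg hk]

theorem trace_diracBlock (hq : 0 < q) (hq1 : q ≠ 1) {k : Fin (n + 1)} (hk : k ≠ Fin.last n) :
    (diracBlock q n k).trace = qInt q n - qInt q (n + 2) := by
  rw [diracBlock, trace_fin_two_of, val_add_one_of_ne_last hk]
  exact_mod_cast diracDiagUp_add_diracDiagDown hq hq1 (Fin.val_lt_last hk)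

theorem det_diracBlock (hq : 0 < q) (hq1 : q ≠ 1) {k : Fin (n + 1)} (hk : k ≠ Fin.last n) :
    (diracBlock q n k).det = -(qInt q n * qInt q (n + 2)) := by
  rw [diracBlock, det_fin_two_of, val_add_one_of_ne_last hk, ← sq]
  exact_mod_cast diracDiagUp_mul_diracDiagDown_sub_sq hq hq1 (Fin.val_lt_last hk)

theorem diracBlock_quadratic (hq : 0 < q) (hq1 : q ≠ 1) (k : Fin (n + 1)) :
    (diracBlock q n k - (qInt q n : ℂ) • 1) * (diracBlock q n k + (qInt q (n + 2) : ℂ) • 1) =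
      0 := by
  rcases eq_or_ne k (Fin.last n) with rfl | hk
  · rw [diracBlock_last hq hq1, sub_self, zero_mul]
  · exact sub_smul_one_mul_add_smul_one_eq_zero_of_fin_two _
      (trace_diracBlock hq hq1 hk) (det_diracBlock hq hq1 hk)

/-- Block `k` is spanned by `eₖ ⊗ ↑` and `eₖ₊₁ ⊗ ↓` (indices mod `n + 1`). -/
def diracBlockEquiv (n : ℕ) : Fin (n + 1) × Fin 2 ≃ Fin 2 × Fin (n + 1) where
  toFun
    | (i, 0) => (0, i)
    | (i, 1) => (1, i - 1)
  invFun
    | (0, k) => (k, 0)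
    | (1, k) => (k + 1, 1)
  left_inv := by rintro ⟨i, a⟩; fin_cases a <;> simp
  right_inv := by rintro ⟨a, k⟩; fin_cases a <;> simp

theorem Dirac_eq_submatrix_blockDiagonal (hq : 0 < q) :
    Dirac q n =
      (blockDiagonal (diracBlock q n)).submatrix (diracBlockEquiv n) (diracBlockEquiv n) := by
  ext ⟨i, a⟩ ⟨j, b⟩
  fin_cases a <;> fin_cases b <;> simp only [Fin.zero_eta, Fin.mk_one, Fin.isValue]
  · simp [Dirac_apply_zero_zero hq, diracBlockEquiv, blockDiagonal_apply, diracBlock]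
  · rw [Dirac_apply_zero_one hq, Fin.ite_val_add_one_eq _ _ fun h => by simp [h, diracOffDiag_self]]
    simp [diracBlockEquiv, blockDiagonal_apply, diracBlock, eq_sub_iff_add_eq, eq_comm]
  · rw [Dirac_apply_one_zero hq]
    simp_rw [eq_comm (a := (i : ℕ))]
    rw [Fin.ite_val_add_one_eq _ _ fun h => by simp [h, diracOffDiag_self]]
    simp only [diracBlockEquiv, Equiv.coe_fn_mk, submatrix_apply, blockDiagonal_apply,
      diracBlock, sub_eq_iff_eq_add]
    split_ifs with h <;> simp [h]
  · simp [Dirac_apply_one_one hq, diracBlockEquiv, blockDiagonal_apply, diracBlock]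

end

/-- For real `q > 0`, `q ≠ 1`, the Dirac operator `D_n` on `ℂ^{n+1} ⊗ ℂ²`
satisfies the quadratic relation `(D_n − [n]·1)(D_n + [n+2]·1) = 0` and has trace
`Tr(D_n) = (n+2)·[n] − n·[n+2]`.  (Equivalently, with `j = n/2`, the Dirac operator acts on
`V_j ⊗ Σ` with eigenvalue `[2j]` on the spin-`(j+1/2)` component of dimension `2j+2` and
eigenvalue `−[2j+2]` on the spin-`(j−1/2)` component of dimension `2j`.) -/
theorem dirac_quadratic_and_trace (q : ℝ) (hq : 0 < q) (hq1 : q ≠ 1) (n : ℕ) :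
    (Dirac q n - ((qInt q n : ℝ) : ℂ) • (1 : Matrix (Fin (n + 1) × Fin 2) (Fin (n + 1) × Fin 2) ℂ)) *
        (Dirac q n + ((qInt q (n + 2) : ℝ) : ℂ) • 1) = 0 ∧
    Matrix.trace (Dirac q n) =
      ((n : ℂ) + 2) * ((qInt q n : ℝ) : ℂ) - (n : ℂ) * ((qInt q (n + 2) : ℝ) : ℂ) := by
  rw [Dirac_eq_submatrix_blockDiagonal hq]
  refine ⟨sub_smul_one_mul_add_smul_one_eq_zero_of_blockDiagonal _ _
    (diracBlock_quadratic hq hq1), ?_⟩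
  rw [trace_submatrix_equiv, trace_blockDiagonal, Fin.sum_univ_castSucc, diracBlock_last hq hq1]
  rw [Finset.sum_congr rfl fun k _ => trace_diracBlock hq hq1 (Fin.castSucc_lt_last k).ne]
  simp only [Finset.sum_const, Finset.card_univ, Fintype.card_fin, trace_smul, trace_one,
    nsmul_eq_mul, smul_eq_mul]
  push_cast
  ring
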